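/- arXiv:1902.01900 — 2 statements merged into one kernel-verified Lean document; each statement's English description precedes it below -/
import Mathlib

section
/- If G is a group with no elements of order two, then every surjective group homomorphism p: R → G admits a set-theoretic section s: G → R with s(1) = 1 and s(x^{-1}) = s(x)^{-1} for all x ∈ G. -/
/-! Pick any section `f` of `p` and a linear order on `G`. Call `x ≠ 1` positive when `x⁻¹ < x`;
since `G` has no involutions, exactly one of `x` and `x⁻¹` is positive. Keep `f` on positive
elements and define `s x := (f x⁻¹)⁻¹` on the others. -/

section SymmetrizedSection

variable {R G : Type*} [Group R] [Group G] [LinearOrder G]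

open Classical in
noncomputable def symmetrizedSection (f : G → R) (x : G) : R :=
  if x = 1 then 1 else if x⁻¹ < x then f x else (f x⁻¹)⁻¹

theorem symmetrizedSection_one (f : G → R) : symmetrizedSection f 1 = 1 := by
  simp [symmetrizedSection]

theorem map_symmetrizedSection (p : R →* G) {f : G → R} (hf : ∀ x, p (f x) = x) (x : G) :
    p (symmetrizedSection f x) = x := by
  unfold symmetrizedSection
  split_ifs with h1
  · exact h1 ▸ map_one p
  · exact hf x
  · rw [map_inv, hf, inv_inv]

theorem symmetrizedSection_inv (hG : ∀ x : G, x ≠ 1 → x⁻¹ ≠ x) (f : G → R) (x : G) :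
    symmetrizedSection f x⁻¹ = (symmetrizedSection f x)⁻¹ := by
  rcases eq_or_ne x 1 with rfl | hx
  · simp [symmetrizedSection_one]
  have hx' : x⁻¹ ≠ 1 := inv_ne_one.mpr hx
  rcases (hG x hx).lt_or_gt with hlt | hgt
  · simp [symmetrizedSection, hx, hx', hlt, hlt.not_gt]
  · simp [symmetrizedSection, hx, hx', hgt, hgt.not_gt]

end SymmetrizedSection

theorem inv_ne_self_of_ne_one {G : Type*} [Group G] (hG : ∀ x : G, x ^ 2 = 1 → x = 1)
    {x : G} (hx : x ≠ 1) : x⁻¹ ≠ x := fun h ↦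
  hx <| hG x <| by rw [sq, mul_eq_one_iff_eq_inv, h]

/-- If `G` has no elements of order two, then every surjective
group homomorphism `p : R → G` admits a set-theoretic section `s` with
`s(1) = 1` and `s(x⁻¹) = s(x)⁻¹` for all `x`. -/
theorem stmt10 {R G : Type*} [Group R] [Group G]
    (p : R →* G) (hp : Function.Surjective p)
    (hG : ∀ x : G, x ^ 2 = 1 → x = 1) :
    ∃ s : G → R, (∀ x, p (s x) = x) ∧ s 1 = 1 ∧
      ∀ x, s x⁻¹ = (s x)⁻¹ := by
  let _ : LinearOrder G := WellOrderingRel.isWellOrder.linearOrder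
  let f := Function.surjInv hp
  exact ⟨symmetrizedSection f, map_symmetrizedSection p (Function.surjInv_eq hp),
    symmetrizedSection_one f, symmetrizedSection_inv (fun _ ↦ inv_ne_self_of_ne_one hG) f⟩
end

section
/- If the 3-cocycle f_σ associated to a normalized s-section (s,σ) of a crossed extension is a coboundary, f_σ(x,y,z) = x·k(y,z) − k(xy,z) + k(x,yz) − k(x,y) for some k: G² → M, then setting τ(x,y) = σ(x,y)·k(x,y)^{-1} (viewing M ⊆ T, written additively in M as σ − k), (s, τ) is again an s-section of the same crossed extension and its associated 3-cocycle f_τ is identically zero. -/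
/-!
By the Peiffer identity `M = ker ∂` is central in `T`, so replacing `σ` by `σ·k⁻¹` changes
`f_σ` by the coboundary of `k`: `f_τ = f_σ·(dk)⁻¹ = 1`. And `∂ τ = ∂ σ` because `∂ k = 1`.
-/

open Subgroup

section CentralTwist

variable {T : Type*} [Group T]

open scoped IsMulCommutative in
theorem mul_mul_inv_mul_inv_of_mem_center {a b c d : T} (ha : a ∈ center T)
    (hb : b ∈ center T) (hc : c ∈ center T) (hd : d ∈ center T) (A B C D : T) :
    (A * a⁻¹) * (B * b⁻¹) * (C * c⁻¹)⁻¹ * (D * d⁻¹)⁻¹ =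
      (A * B * C⁻¹ * D⁻¹) * (a * c⁻¹ * b * d⁻¹)⁻¹ := by
  lift a to center T using ha
  lift b to center T using hb
  lift c to center T using hc
  lift d to center T using hd
  -- `(X, z) ↦ X * z` is a homomorphism `T × Z(T) →* T`, separating the central factors.
  let φ : T × center T →* T := (MonoidHom.id T).noncommCoprod (center T).subtype
    fun X z => mem_center_iff.mp z.2 X
  have hφ : ∀ X (z : center T), X * z = φ (X, z) := fun _ _ => rfl
  have hcomm :
      ((a : T) * (c : T)⁻¹ * b * (d : T)⁻¹)⁻¹ = ((a⁻¹ * b⁻¹ * c * d : center T) : T) := by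
    norm_cast
    simp only [mul_inv_rev, inv_inv]
    ac_rfl
  rw [hcomm]
  simp only [← coe_inv, hφ, ← map_mul, ← map_inv, Prod.mk_mul_mk, Prod.inv_mk, inv_inv]

end CentralTwist

section CrossedModule

variable {T R : Type*} [Group T] [Group R] (δ : T →* R)

theorem mem_center_of_mem_ker [MulAction R T] (hpeif2 : ∀ t u : T, δ t • u = t * u * t⁻¹)
    {m : T} (hm : m ∈ δ.ker) : m ∈ center T := by
  refine mem_center_iff.mpr fun u => ?_
  have hconj := hpeif2 m u
  rwa [MonoidHom.mem_ker.mp hm, one_smul, eq_mul_inv_iff_mul_eq] at hconj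

theorem smul_mem_ker [SMul R T] (hpeif1 : ∀ (r : R) (t : T), δ (r • t) = r * δ t * r⁻¹)
    (r : R) {m : T} (hm : m ∈ δ.ker) : r • m ∈ δ.ker := by
  rw [MonoidHom.mem_ker, hpeif1, MonoidHom.mem_ker.mp hm, mul_one, mul_inv_cancel]

variable {G : Type*} [Group G]

def sectionCocycle [SMul R T] (s : G → R) (σ : G → G → T) (x y z : G) : T :=
  (s x • σ y z) * σ x (y * z) * (σ (x * y) z)⁻¹ * (σ x y)⁻¹

def sectionCoboundary [SMul R T] (s : G → R) (k : G → G → T) (x y z : G) : T :=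
  (s x • k y z) * (k (x * y) z)⁻¹ * k x (y * z) * (k x y)⁻¹

theorem sectionCocycle_mul_inv [MulDistribMulAction R T]
    (hpeif1 : ∀ (r : R) (t : T), δ (r • t) = r * δ t * r⁻¹)
    (hpeif2 : ∀ t u : T, δ t • u = t * u * t⁻¹) (s : G → R) (σ k : G → G → T)
    (hk : ∀ x y, k x y ∈ δ.ker) (x y z : G) :
    sectionCocycle s (fun x y => σ x y * (k x y)⁻¹) x y z =
      sectionCocycle s σ x y z * (sectionCoboundary s k x y z)⁻¹ := by
  have central : ∀ m ∈ δ.ker, m ∈ center T := fun m => mem_center_of_mem_ker δ hpeif2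
  simp only [sectionCocycle, sectionCoboundary, smul_mul', smul_inv']
  exact mul_mul_inv_mul_inv_of_mem_center (central _ (smul_mem_ker δ hpeif1 _ (hk y z)))
    (central _ (hk x (y * z))) (central _ (hk (x * y) z)) (central _ (hk x y)) _ _ _ _

end CrossedModule

theorem stmt14_general {T R G : Type*} [Group T] [Group R] [Group G]
    [MulDistribMulAction R T] (δ : T →* R)
    (hpeif1 : ∀ (r : R) (t : T), δ (r • t) = r * δ t * r⁻¹)
    (hpeif2 : ∀ t u : T, (δ t) • u = t * u * t⁻¹)
    (s : G → R) (σ : G → G → T)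
    (hσ : ∀ x y, s x * s y = δ (σ x y) * s (x * y))
    (f : G → G → G → T)
    (hf : ∀ x y z, f x y z =
      (s x • σ y z) * σ x (y * z) * (σ (x * y) z)⁻¹ * (σ x y)⁻¹)
    -- k : G² → M = ker δ
    (k : G → G → T) (hk : ∀ x y, k x y ∈ δ.ker)
    -- f_σ is the coboundary of k (multiplicative notation)
    (hcob : ∀ x y z, f x y z =
      (s x • k y z) * (k (x * y) z)⁻¹ * k x (y * z) * (k x y)⁻¹)
    (τ : G → G → T) (hτ : ∀ x y, τ x y = σ x y * (k x y)⁻¹) :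
    (∀ x y, s x * s y = δ (τ x y) * s (x * y)) ∧
    (∀ x y z, (s x • τ y z) * τ x (y * z) * (τ (x * y) z)⁻¹ * (τ x y)⁻¹ = 1) := by
  obtain rfl : τ = fun x y => σ x y * (k x y)⁻¹ := funext₂ hτ
  refine ⟨fun x y => ?_, fun x y z => ?_⟩
  · rw [map_mul, map_inv, MonoidHom.mem_ker.mp (hk x y), inv_one, mul_one, hσ]
  · have hfk : sectionCocycle s σ x y z = sectionCoboundary s k x y z :=
      (hf x y z).symm.trans (hcob x y z)
    calc _ = sectionCocycle s σ x y z * (sectionCoboundary s k x y z)⁻¹ :=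
          sectionCocycle_mul_inv δ hpeif1 hpeif2 s σ k hk x y z
      _ = 1 := by rw [hfk, mul_inv_cancel]

/-- If the 3-cocycle `f_σ` of a normalized s-section `(s,σ)`
is the coboundary of `k : G² → M` (`M = ker ∂ ⊆ T`, written
multiplicatively), then `τ(x,y) = σ(x,y)·k(x,y)⁻¹` gives another s-section
`(s,τ)` of the same crossed extension whose 3-cocycle `f_τ` is trivial. -/
theorem stmt14 {T R G : Type*} [Group T] [Group R] [Group G]
    [MulDistribMulAction R T] (δ : T →* R)
    (hpeif1 : ∀ (r : R) (t : T), δ (r • t) = r * δ t * r⁻¹)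
    (hpeif2 : ∀ t u : T, (δ t) • u = t * u * t⁻¹)
    (p : R →* G) (hp : Function.Surjective p)
    (hexact : ∀ r : R, p r = 1 ↔ r ∈ δ.range)
    (s : G → R) (σ : G → G → T)
    (hs : ∀ x, p (s x) = x)
    (hσ : ∀ x y, s x * s y = δ (σ x y) * s (x * y))
    (hs1 : s 1 = 1) (hσ1 : ∀ x, σ 1 x = 1 ∧ σ x 1 = 1)
    (f : G → G → G → T)
    (hf : ∀ x y z, f x y z =
      (s x • σ y z) * σ x (y * z) * (σ (x * y) z)⁻¹ * (σ x y)⁻¹)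
    -- k : G² → M = ker δ
    (k : G → G → T) (hk : ∀ x y, k x y ∈ δ.ker)
    -- f_σ is the coboundary of k (multiplicative notation)
    (hcob : ∀ x y z, f x y z =
      (s x • k y z) * (k (x * y) z)⁻¹ * k x (y * z) * (k x y)⁻¹)
    (τ : G → G → T) (hτ : ∀ x y, τ x y = σ x y * (k x y)⁻¹) :
    (∀ x y, s x * s y = δ (τ x y) * s (x * y)) ∧
    (∀ x y z, (s x • τ y z) * τ x (y * z) * (τ (x * y) z)⁻¹ * (τ x y)⁻¹ = 1) :=
  stmt14_general δ hpeif1 hpeif2 s σ hσ f hf k hk hcob τ hτ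
end
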